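/- arXiv:2109.03932 — 3 statements merged into one kernel-verified Lean document; each statement's English description precedes it below -/
import Mathlib

section
/- (Proposition 2.1) Assume Condition 5. Then the stopped estimating functions are unbiased, i.e. E[g_{n,1}(θ₀)] = 0 and E[g_{n,2}(η₀)] = 0 for every n ≥ 1, and moreover n^{−1} g_{n,k}(η₀) → 0 almost surely as n → ∞, for k = 1, 2. -/
open MeasureTheory Filter Topology

/-- Stopped estimating function `g_{n,1}(θ₀) = ∑_{i=1}^n ∑_{j=1}^{τ_i} f_{ij} Z_{ij}`. -/
noncomputable def gn1 {Ω : Type*} {p : ℕ} (f : ℕ → ℕ → Ω → EuclideanSpace ℝ (Fin p))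
    (Z : ℕ → ℕ → Ω → ℝ) (τ : ℕ → Ω → ℕ) (n : ℕ) (ω : Ω) : EuclideanSpace ℝ (Fin p) :=
  ∑ i ∈ Finset.Icc 1 n, ∑ j ∈ Finset.Icc 1 (τ i ω), Z i j ω • f i j ω

/-- Stopped estimating function `g_{n,2}(η₀) = ∑_{i=1}^n ∑_{j=1}^{τ_i} b_{ij}(Z_{ij}² − σ₀²)`. -/
noncomputable def gn2 {Ω : Type*} (b : ℕ → ℕ → Ω → ℝ)
    (Z : ℕ → ℕ → Ω → ℝ) (σ0 : ℝ) (τ : ℕ → Ω → ℕ) (n : ℕ) (ω : Ω) : ℝ :=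
  ∑ i ∈ Finset.Icc 1 n, ∑ j ∈ Finset.Icc 1 (τ i ω), b i j ω * ((Z i j ω) ^ 2 - σ0 ^ 2)

/-!
For each subject the event `{j ≤ τ_i}` equals `{S_{i,j-1} < C_i}`, which is known at time
`j - 1`; so every term `1{j ≤ τ_i} Z_{ij} f_{ij}` (resp. `1{j ≤ τ_i} b_{ij} (Z_{ij}² - σ₀²)`) has
mean zero, by pulling the `𝓖_{i,j-1}`-measurable factor out of the conditional expectation.
Condition 5 dominates all truncations `∑_{j ≤ min(N, τ_i)}` by `sup_j |·| · τ_i`, and dominated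
convergence makes each subject's stopped sum integrable with mean zero. These stopped sums are one
fixed measurable function of the i.i.d. subject data vectors, so the strong law of large numbers
gives `n⁻¹ g_{n,k} → 0` almost surely.
-/

open ProbabilityTheory Finset

lemma Nat.add_one_le_sInf_iff {s : Set ℕ} {k : ℕ} :
    k + 1 ≤ sInf s ↔ s.Nonempty ∧ ∀ m ≤ k, m ∉ s := by
  refine ⟨fun h => ⟨Nat.nonempty_of_pos_sInf (by omega), fun m hm =>
    Nat.notMem_of_lt_sInf (by omega)⟩, fun ⟨hs, hk⟩ => ?_⟩
  by_contra! h
  exact hk _ (by omega) (Nat.sInf_mem hs)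

lemma measurable_nat_sInf_setOf {α : Type*} [MeasurableSpace α] {q : ℕ → α → Prop}
    (hq : ∀ n, MeasurableSet {x | q n x}) : Measurable fun x => sInf {n | q n x} := by
  refine measurable_of_Ici fun k => ?_
  cases k with
  | zero => simp
  | succ k =>
    simp only [Set.preimage, Set.mem_Ici, Nat.add_one_le_sInf_iff, Set.ofPred_and, Set.Nonempty,
      Set.mem_ofPred_eq, Set.ofPred_exists, Set.ofPred_forall]
    exact (MeasurableSet.iUnion hq).inter
      (MeasurableSet.iInter fun m => MeasurableSet.iInter fun _ => (hq m).compl)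

noncomputable def firstPassage (c : ℝ) (s : ℕ → ℝ) : ℕ := sInf {j | 1 ≤ j ∧ c ≤ s j}

lemma firstPassage_eq {c : ℝ} {s : ℕ → ℝ} {t : ℕ} (ht1 : 1 ≤ t) (ht : c ≤ s t)
    (hbefore : ∀ j, 1 ≤ j → j < t → s j < c) : firstPassage c s = t := by
  refine le_antisymm (Nat.sInf_le ⟨ht1, ht⟩) (le_csInf ⟨t, ht1, ht⟩ fun j ⟨hj1, hj⟩ => ?_)
  by_contra! hjt
  exact (hbefore j hj1 hjt).not_ge hj

lemma le_firstPassage_iff {c : ℝ} {s : ℕ → ℝ} (hs : Monotone s) (h0 : s 0 < c)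
    (hhit : ∃ t, c ≤ s t) {j : ℕ} (hj : 1 ≤ j) : j ≤ firstPassage c s ↔ s (j - 1) < c := by
  obtain ⟨t, ht⟩ := hhit
  have hne : {j | 1 ≤ j ∧ c ≤ s j}.Nonempty :=
    ⟨t, Nat.one_le_iff_ne_zero.mpr fun h => (h ▸ ht).not_gt h0, ht⟩
  obtain ⟨-, hhit⟩ := Nat.sInf_mem hne
  unfold firstPassage
  refine ⟨fun hjt => ?_, fun hlt => ?_⟩
  · rcases Nat.eq_or_lt_of_le hj with rfl | hj
    · exact h0
    · have := Nat.notMem_of_lt_sInf (s := {j | 1 ≤ j ∧ c ≤ s j}) (m := j - 1) (by omega)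
      simpa [show 1 ≤ j - 1 by omega] using this
  · by_contra! hjt
    exact (hhit.trans (hs (by omega))).not_gt hlt

lemma Measurable.firstPassage {α : Type*} [MeasurableSpace α] {c : α → ℝ} {s : ℕ → α → ℝ}
    (hc : Measurable c) (hs : ∀ j, Measurable (s j)) :
    Measurable fun x => firstPassage (c x) fun j => s j x :=
  measurable_nat_sInf_setOf fun n =>
    (MeasurableSet.const (1 ≤ n)).inter (measurableSet_le hc (hs n))

lemma Measurable.sum_Icc_stopped {α E : Type*} [MeasurableSpace α] [AddCommMonoid E]
    [MeasurableSpace E] [MeasurableAdd₂ E] {u : ℕ → α → E} (hu : ∀ j, 1 ≤ j → Measurable (u j))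
    {T : α → ℕ} (hT : Measurable T) : Measurable fun x => ∑ j ∈ Icc 1 (T x), u j x := by
  have : Measurable fun q : α × ℕ => ∑ j ∈ Icc 1 q.2, u j q.1 :=
    measurable_from_prod_countable_left fun k =>
      Finset.measurable_sum _ fun j hj => hu j (Finset.mem_Icc.mp hj).1
  exact this.comp (measurable_id.prodMk hT)

lemma norm_sum_Icc_le_iSup_mul {E : Type*} [SeminormedAddCommGroup E] {u : ℕ → E}
    (hu : BddAbove (Set.range fun j => ‖u j‖)) (t : ℕ) :
    ‖∑ j ∈ Icc 1 t, u j‖ ≤ (⨆ j, ‖u j‖) * t := by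
  calc ‖∑ j ∈ Icc 1 t, u j‖ ≤ ∑ j ∈ Icc 1 t, ‖u j‖ := norm_sum_le _ _
    _ ≤ ∑ _j ∈ Icc 1 t, ⨆ j, ‖u j‖ := Finset.sum_le_sum fun j _ => le_ciSup hu j
    _ = (⨆ j, ‖u j‖) * t := by simp [mul_comm]

lemma sum_Icc_indicator_le {Ω E : Type*} [AddCommMonoid E] (u : ℕ → Ω → E) (τ : Ω → ℕ)
    (N : ℕ) (ω : Ω) :
    ∑ j ∈ Icc 1 N, {ω | j ≤ τ ω}.indicator (u j) ω = ∑ j ∈ Icc 1 (min N (τ ω)), u j ω := by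
  simp only [Set.indicator_apply, Set.mem_ofPred_eq, ← Finset.sum_filter]
  congr 1
  ext j
  simp only [Finset.mem_filter, Finset.mem_Icc]
  omega

section OptionalStopping

variable {Ω E : Type*} {m0 : MeasurableSpace Ω} {P : Measure Ω}
  [NormedAddCommGroup E] [NormedSpace ℝ E] [CompleteSpace E]

lemma condExp_sub_const_ae_eq_zero [IsFiniteMeasure P] {m : MeasurableSpace Ω} (hm : m ≤ m0)
    {X : Ω → ℝ} {c : ℝ} (hX : Integrable X P) (h : P[X|m] =ᵐ[P] fun _ => c) : P[fun ω => X ω - c|m] =ᵐ[P] 0 := by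
  filter_upwards [condExp_sub (m := m) hX (integrable_const c), h] with ω hsub hω
  rw [show (fun ω => X ω - c) = X - fun _ => c from rfl, hsub, Pi.sub_apply, hω,
    condExp_const hm, sub_self, Pi.zero_apply]

lemma integral_smul_eq_zero_of_condExp_eq_zero {m : MeasurableSpace Ω} (hm : m ≤ m0)
    [SigmaFinite (P.trim hm)] {ζ : Ω → ℝ} {g : Ω → E} (hg : StronglyMeasurable[m] g)
    (hζ : Integrable ζ P) (hζg : Integrable (ζ • g) P) (hcond : P[ζ|m] =ᵐ[P] 0) :
    ∫ ω, ζ ω • g ω ∂P = 0 := by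
  rw [← integral_condExp hm]
  refine (integral_congr_ae ?_).trans (integral_zero _ _)
  filter_upwards [condExp_smul_of_aestronglyMeasurable_right hζ hζg hg.aestronglyMeasurable,
    hcond] with ω h hω
  rw [show (fun ω => ζ ω • g ω) = ζ • g from rfl, h, Pi.smul_apply', hω, Pi.zero_apply,
    zero_smul]

theorem integrable_and_integral_sum_Icc_stopped_eq_zero [IsFiniteMeasure P]
    (𝒢 : Filtration ℕ m0) {ζ : ℕ → Ω → ℝ} {g : ℕ → Ω → E} {τ : Ω → ℕ}
    (hτ : ∀ j, 1 ≤ j → MeasurableSet[𝒢 (j - 1)] {ω | j ≤ τ ω})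
    (hg : ∀ j, 1 ≤ j → StronglyMeasurable[𝒢 (j - 1)] (g j))
    (hζ : ∀ j, 1 ≤ j → Integrable (ζ j) P)
    (hcond : ∀ j, 1 ≤ j → P[ζ j|𝒢 (j - 1)] =ᵐ[P] 0)
    (hbd : ∀ ω, BddAbove (Set.range fun j => ‖ζ j ω • g j ω‖))
    (hint : Integrable (fun ω => (⨆ j, ‖ζ j ω • g j ω‖) * (τ ω : ℝ)) P) :
    Integrable (fun ω => ∑ j ∈ Icc 1 (τ ω), ζ j ω • g j ω) P ∧
      ∫ ω, ∑ j ∈ Icc 1 (τ ω), ζ j ω • g j ω ∂P = 0 := by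
  set G : Ω → ℝ := fun ω => ⨆ j, ‖ζ j ω • g j ω‖
  set F : ℕ → Ω → E := fun N => ∑ j ∈ Icc 1 N, {ω | j ≤ τ ω}.indicator (fun ω => ζ j ω • g j ω)
  have hG : ∀ ω, 0 ≤ G ω := fun ω => (norm_nonneg _).trans (le_ciSup (hbd ω) 0)
  have hF_le : ∀ N ω, ‖F N ω‖ ≤ G ω * τ ω := fun N ω => by
    simp only [F, Finset.sum_apply, sum_Icc_indicator_le]
    refine (norm_sum_Icc_le_iSup_mul (hbd ω) _).trans ?_
    gcongr
    · exact hG ω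
    · exact min_le_right _ _
  have hterm_meas : ∀ j, 1 ≤ j →
      AEStronglyMeasurable ({ω | j ≤ τ ω}.indicator fun ω => ζ j ω • g j ω) P := fun j hj =>
    ((hζ j hj).aestronglyMeasurable.smul
      ((hg j hj).mono (𝒢.le _)).aestronglyMeasurable).indicator (𝒢.le _ _ (hτ j hj))
  have hF_meas : ∀ N, AEStronglyMeasurable (F N) P := fun N =>
    Finset.aestronglyMeasurable_sum _ fun j hj => hterm_meas j (Finset.mem_Icc.mp hj).1
  have hF_lim : ∀ ω, Tendsto (fun N => F N ω) atTop (𝓝 (∑ j ∈ Icc 1 (τ ω), ζ j ω • g j ω)) :=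
    fun ω => tendsto_atTop_of_eventually_const (i₀ := τ ω) fun N hN => by
      simp only [F, Finset.sum_apply, sum_Icc_indicator_le, min_eq_right hN]
  have hterm_int : ∀ j, 1 ≤ j →
      Integrable ({ω | j ≤ τ ω}.indicator fun ω => ζ j ω • g j ω) P := fun j hj => by
    refine hint.mono' (hterm_meas j hj) (ae_of_all _ fun ω => ?_)
    by_cases hω : j ≤ τ ω
    · rw [Set.indicator_of_mem (by exact hω)]
      calc ‖ζ j ω • g j ω‖ ≤ G ω := le_ciSup (hbd ω) j
        _ ≤ G ω * τ ω := le_mul_of_one_le_right (hG ω) (by exact_mod_cast hj.trans hω)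
    · rw [Set.indicator_of_notMem (by exact hω), norm_zero]
      exact mul_nonneg (hG ω) (Nat.cast_nonneg _)
  have hF_zero : ∀ N, ∫ ω, F N ω ∂P = 0 := fun N => by
    simp only [F, Finset.sum_apply]
    rw [integral_finsetSum _ fun j hj => hterm_int j (Finset.mem_Icc.mp hj).1]
    refine Finset.sum_eq_zero fun j hj => ?_
    have hj : 1 ≤ j := (Finset.mem_Icc.mp hj).1
    simp only [Set.indicator_smul_apply]
    exact integral_smul_eq_zero_of_condExp_eq_zero (𝒢.le _) ((hg j hj).indicator (hτ j hj))
      (hζ j hj) (by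
        convert hterm_int j hj using 1
        ext ω
        simp [Set.indicator_smul_apply]) (hcond j hj)
  have hmeas : AEStronglyMeasurable (fun ω => ∑ j ∈ Icc 1 (τ ω), ζ j ω • g j ω) P :=
    aestronglyMeasurable_of_tendsto_ae atTop hF_meas (ae_of_all _ hF_lim)
  refine ⟨hint.mono' hmeas (ae_of_all _ fun ω => ?_), ?_⟩
  · simpa [F, sum_Icc_indicator_le, min_eq_right (le_refl _)] using hF_le (τ ω) ω
  · refine tendsto_nhds_unique (tendsto_integral_of_dominated_convergence _ hF_meas hint
      (fun N => ae_of_all _ (hF_le N)) (ae_of_all _ hF_lim)) ?_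
    simp [hF_zero]

theorem integrable_and_integral_sum_Icc_stopped_mul_eq_zero [IsFiniteMeasure P]
    (𝒢 : Filtration ℕ m0) {ζ g : ℕ → Ω → ℝ} {τ : Ω → ℕ}
    (hτ : ∀ j, 1 ≤ j → MeasurableSet[𝒢 (j - 1)] {ω | j ≤ τ ω})
    (hg : ∀ j, 1 ≤ j → StronglyMeasurable[𝒢 (j - 1)] (g j))
    (hζ : ∀ j, 1 ≤ j → Integrable (ζ j) P)
    (hcond : ∀ j, 1 ≤ j → P[ζ j|𝒢 (j - 1)] =ᵐ[P] 0)
    (hbd : ∀ ω, BddAbove (Set.range fun j => |g j ω * ζ j ω|))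
    (hint : Integrable (fun ω => (⨆ j, |g j ω * ζ j ω|) * (τ ω : ℝ)) P) :
    Integrable (fun ω => ∑ j ∈ Icc 1 (τ ω), g j ω * ζ j ω) P ∧
      ∫ ω, ∑ j ∈ Icc 1 (τ ω), g j ω * ζ j ω ∂P = 0 := by
  have hcomm : ∀ j ω, ζ j ω • g j ω = g j ω * ζ j ω := fun j ω => mul_comm _ _
  simpa only [hcomm] using integrable_and_integral_sum_Icc_stopped_eq_zero 𝒢 hτ hg hζ hcond
    (by simpa only [hcomm, Real.norm_eq_abs] using hbd)
    (by simpa only [hcomm, Real.norm_eq_abs] using hint)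

end OptionalStopping

lemma strong_law_ae_Icc_comp {Ω β E : Type*} {m0 : MeasurableSpace Ω} {P : Measure Ω}
    [IsProbabilityMeasure P] [MeasurableSpace β] [NormedAddCommGroup E] [NormedSpace ℝ E]
    [CompleteSpace E] [MeasurableSpace E] [BorelSpace E] {D : ℕ → Ω → β}
    (hindep : iIndepFun D P) (hident : ∀ i, IdentDistrib (D i) (D 1) P P) {F : β → E}
    (hF : Measurable F) (hint : Integrable (fun ω => F (D 1 ω)) P) :
    ∀ᵐ ω ∂P, Tendsto (fun n : ℕ => (n : ℝ)⁻¹ • ∑ i ∈ Icc 1 n, F (D i ω)) atTop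
      (𝓝 (∫ ω, F (D 1 ω) ∂P)) := by
  have hlaw := strong_law_ae (μ := P) (fun i ω => F (D (i + 1) ω)) hint
    (fun i j hij => (hindep.comp (fun _ => F) fun _ => hF).indepFun (by simpa using hij))
    (fun i => (hident (i + 1)).comp hF)
  filter_upwards [hlaw] with ω hω
  have hshift : ∀ n, ∑ i ∈ Icc 1 n, F (D i ω) = ∑ i ∈ range n, F (D (i + 1) ω) := fun n => by
    rw [range_eq_Ico, sum_Ico_add' (fun i => F (D i ω)), zero_add, Ico_add_one_right_eq_Icc]
  simp only [hshift]
  exact hω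

theorem statement1_general
    {Ω : Type*} {m0 : MeasurableSpace Ω} (P : Measure Ω) [IsProbabilityMeasure P]
    {p : ℕ}
    (S : ℕ → ℕ → Ω → ℝ) (C : ℕ → Ω → ℝ)
    (f : ℕ → ℕ → Ω → EuclideanSpace ℝ (Fin p)) (Z : ℕ → ℕ → Ω → ℝ) (b : ℕ → ℕ → Ω → ℝ)
    (σ0 : ℝ) (𝒢 : ℕ → Filtration ℕ m0) (τ : ℕ → Ω → ℕ)
    -- basic structure of the data
    (hS0 : ∀ i ω, S i 0 ω = 0)
    (hSmono : ∀ i ω, StrictMono fun j => S i j ω)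
    (hCpos : ∀ i ω, 0 < C i ω)
    -- `τ_i = min{j ≥ 1 : C_i ≤ S_{ij}}`, finite (ℕ-valued)
    (hτ : ∀ i ω, 1 ≤ τ i ω ∧ C i ω ≤ S i (τ i ω) ω ∧ ∀ j, 1 ≤ j → j < τ i ω → S i j ω < C i ω)
    -- measurability with respect to the enlarged filtrations 𝓖_i
    (hfmeas : ∀ i j, 1 ≤ j → StronglyMeasurable[𝒢 i (j - 1)] (f i j))
    (hbmeas : ∀ i j, 1 ≤ j → StronglyMeasurable[𝒢 i (j - 1)] (b i j))
    (hZmeas : ∀ i j, 1 ≤ j → StronglyMeasurable[𝒢 i j] (Z i j))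
    (hSC : ∀ i j, 1 ≤ j → MeasurableSet[𝒢 i (j - 1)] {ω | S i (j - 1) ω < C i ω})
    -- conditional moments at the true parameter (model (1.2) together with assumption (A))
    (hZcond : ∀ i j, 1 ≤ j → P[Z i j|𝒢 i (j - 1)] =ᵐ[P] fun _ => 0)
    (hZ2cond : ∀ i j, 1 ≤ j → P[fun ω => (Z i j ω) ^ 2|𝒢 i (j - 1)] =ᵐ[P] fun _ => σ0 ^ 2)
    (hZL2 : ∀ i j, 1 ≤ j → Integrable (fun ω => (Z i j ω) ^ 2) P)
    -- the data vectors of distinct subjects are i.i.d.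
    (hindep : ProbabilityTheory.iIndepFun
      (fun i ω => (C i ω, fun j => (S i j ω, Z i j ω, b i j ω, f i j ω))) P)
    (hident : ∀ i, ProbabilityTheory.IdentDistrib
      (fun ω => (C i ω, fun j => (S i j ω, Z i j ω, b i j ω, f i j ω)))
      (fun ω => (C 1 ω, fun j => (S 1 j ω, Z 1 j ω, b 1 j ω, f 1 j ω))) P P)
    -- Condition 5: `g_i(θ₀) τ_i` and `h_i(η₀) τ_i` are integrable, where
    -- `g_i = sup_j ‖f_{ij} Z_{ij}‖` and `h_i = sup_j |b_{ij}(Z_{ij}² − σ₀²)|`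
    (hbd1 : ∀ i ω, BddAbove (Set.range fun j => ‖Z i j ω • f i j ω‖))
    (hbd2 : ∀ i ω, BddAbove (Set.range fun j => |b i j ω * ((Z i j ω) ^ 2 - σ0 ^ 2)|))
    (hCond5a : ∀ i, Integrable (fun ω => (⨆ j, ‖Z i j ω • f i j ω‖) * (τ i ω : ℝ)) P)
    (hCond5b : ∀ i,
      Integrable (fun ω => (⨆ j, |b i j ω * ((Z i j ω) ^ 2 - σ0 ^ 2)|) * (τ i ω : ℝ)) P) :
    (∀ n, 1 ≤ n → ∫ ω, gn1 f Z τ n ω ∂P = 0) ∧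
    (∀ n, 1 ≤ n → ∫ ω, gn2 b Z σ0 τ n ω ∂P = 0) ∧
    (∀ᵐ ω ∂P, Tendsto (fun n : ℕ => (n : ℝ)⁻¹ • gn1 f Z τ n ω) atTop (𝓝 0)) ∧
    (∀ᵐ ω ∂P, Tendsto (fun n : ℕ => (n : ℝ)⁻¹ * gn2 b Z σ0 τ n ω) atTop (𝓝 0)) := by
  have hτ_eq : ∀ i ω, (firstPassage (C i ω) fun j => S i j ω) = τ i ω := fun i ω =>
    firstPassage_eq (hτ i ω).1 (hτ i ω).2.1 (hτ i ω).2.2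
  have hpred : ∀ i j, 1 ≤ j → MeasurableSet[𝒢 i (j - 1)] {ω | j ≤ τ i ω} := fun i j hj => by
    convert hSC i j hj using 1
    ext ω
    rw [Set.mem_ofPred_eq, ← hτ_eq]
    exact le_firstPassage_iff (hSmono i ω).monotone (by rw [hS0]; exact hCpos i ω)
      ⟨_, (hτ i ω).2.1⟩ hj
  have hZ : ∀ i j, 1 ≤ j → Integrable (Z i j) P := fun i j hj =>
    ((memLp_two_iff_integrable_sq ((hZmeas i j hj).mono ((𝒢 i).le j)).aestronglyMeasurable).2
      (hZL2 i j hj)).integrable one_le_two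
  have hsubj1 := fun i => integrable_and_integral_sum_Icc_stopped_eq_zero (𝒢 i) (hpred i)
    (hfmeas i) (hZ i) (hZcond i) (hbd1 i) (hCond5a i)
  have hsubj2 := fun i => integrable_and_integral_sum_Icc_stopped_mul_eq_zero (𝒢 i)
    (ζ := fun j ω => Z i j ω ^ 2 - σ0 ^ 2) (hpred i) (hbmeas i)
    (fun j hj => (hZL2 i j hj).sub (integrable_const _))
    (fun j hj => condExp_sub_const_ae_eq_zero ((𝒢 i).le _) (hZL2 i j hj) (hZ2cond i j hj))
    (hbd2 i) (hCond5b i)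
  -- the strong law needs `τ_i` as a fixed function of the `i`-th data vector
  obtain rfl := funext₂ hτ_eq
  have hlaw1 := strong_law_ae_Icc_comp hindep hident
    (F := fun v => ∑ j ∈ Icc 1 (firstPassage v.1 fun j => (v.2 j).1), (v.2 j).2.1 • (v.2 j).2.2.2)
    (Measurable.sum_Icc_stopped (fun j _ => by fun_prop) (Measurable.firstPassage measurable_fst
      fun j => by fun_prop)) (hsubj1 1).1
  have hlaw2 := strong_law_ae_Icc_comp hindep hident
    (F := fun v => ∑ j ∈ Icc 1 (firstPassage v.1 fun j => (v.2 j).1),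
      (v.2 j).2.2.1 * ((v.2 j).2.1 ^ 2 - σ0 ^ 2))
    (Measurable.sum_Icc_stopped (fun j _ => by fun_prop) (Measurable.firstPassage measurable_fst
      fun j => by fun_prop)) (hsubj2 1).1
  rw [(hsubj1 1).2] at hlaw1
  rw [(hsubj2 1).2] at hlaw2
  simp only [smul_eq_mul] at hlaw2
  refine ⟨fun n _ => ?_, fun n _ => ?_, hlaw1, hlaw2⟩
  · simp only [gn1]
    rw [integral_finsetSum _ fun i _ => (hsubj1 i).1]
    exact sum_eq_zero fun i _ => (hsubj1 i).2
  · simp only [gn2]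
    rw [integral_finsetSum _ fun i _ => (hsubj2 i).1]
    exact sum_eq_zero fun i _ => (hsubj2 i).2

/-- Proposition 2.1: under Condition 5, the stopped estimating functions are
unbiased, and `n⁻¹ g_{n,k}` at the true parameter tends to `0` almost surely, `k = 1, 2`. -/
theorem statement1
    {Ω : Type*} {m0 : MeasurableSpace Ω} (P : Measure Ω) [IsProbabilityMeasure P]
    {p : ℕ}
    (S : ℕ → ℕ → Ω → ℝ) (C : ℕ → Ω → ℝ) (x : ℕ → ℕ → Ω → EuclideanSpace ℝ (Fin p))
    (f : ℕ → ℕ → Ω → EuclideanSpace ℝ (Fin p)) (Z : ℕ → ℕ → Ω → ℝ) (b : ℕ → ℕ → Ω → ℝ)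
    (σ0 : ℝ) (𝒢 : ℕ → Filtration ℕ m0) (τ : ℕ → Ω → ℕ)
    -- basic structure of the data
    (hS0 : ∀ i ω, S i 0 ω = 0)
    (hSmono : ∀ i ω, StrictMono fun j => S i j ω)
    (hCpos : ∀ i ω, 0 < C i ω)
    (hSmeas : ∀ i j, Measurable (S i j))
    (hCmeas : ∀ i, Measurable (C i))
    -- `τ_i = min{j ≥ 1 : C_i ≤ S_{ij}}`, finite (ℕ-valued)
    (hτ : ∀ i ω, 1 ≤ τ i ω ∧ C i ω ≤ S i (τ i ω) ω ∧ ∀ j, 1 ≤ j → j < τ i ω → S i j ω < C i ω)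
    -- measurability with respect to the enlarged filtrations 𝓖_i
    (hfmeas : ∀ i j, 1 ≤ j → StronglyMeasurable[𝒢 i (j - 1)] (f i j))
    (hbmeas : ∀ i j, 1 ≤ j → StronglyMeasurable[𝒢 i (j - 1)] (b i j))
    (hZmeas : ∀ i j, 1 ≤ j → StronglyMeasurable[𝒢 i j] (Z i j))
    (hSC : ∀ i j, 1 ≤ j → MeasurableSet[𝒢 i (j - 1)] {ω | S i (j - 1) ω < C i ω})
    -- conditional moments at the true parameter (model (1.2) together with assumption (A))
    (hZcond : ∀ i j, 1 ≤ j → P[Z i j|𝒢 i (j - 1)] =ᵐ[P] fun _ => 0)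
    (hZ2cond : ∀ i j, 1 ≤ j → P[fun ω => (Z i j ω) ^ 2|𝒢 i (j - 1)] =ᵐ[P] fun _ => σ0 ^ 2)
    (hZL2 : ∀ i j, 1 ≤ j → Integrable (fun ω => (Z i j ω) ^ 2) P)
    -- the data vectors of distinct subjects are i.i.d.
    (hindep : ProbabilityTheory.iIndepFun
      (fun i ω => (C i ω, fun j => (S i j ω, Z i j ω, b i j ω, f i j ω))) P)
    (hident : ∀ i, ProbabilityTheory.IdentDistrib
      (fun ω => (C i ω, fun j => (S i j ω, Z i j ω, b i j ω, f i j ω)))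
      (fun ω => (C 1 ω, fun j => (S 1 j ω, Z 1 j ω, b 1 j ω, f 1 j ω))) P P)
    -- Condition 5: `g_i(θ₀) τ_i` and `h_i(η₀) τ_i` are integrable, where
    -- `g_i = sup_j ‖f_{ij} Z_{ij}‖` and `h_i = sup_j |b_{ij}(Z_{ij}² − σ₀²)|`
    (hbd1 : ∀ i ω, BddAbove (Set.range fun j => ‖Z i j ω • f i j ω‖))
    (hbd2 : ∀ i ω, BddAbove (Set.range fun j => |b i j ω * ((Z i j ω) ^ 2 - σ0 ^ 2)|))
    (hCond5a : ∀ i, Integrable (fun ω => (⨆ j, ‖Z i j ω • f i j ω‖) * (τ i ω : ℝ)) P)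
    (hCond5b : ∀ i,
      Integrable (fun ω => (⨆ j, |b i j ω * ((Z i j ω) ^ 2 - σ0 ^ 2)|) * (τ i ω : ℝ)) P) :
    (∀ n, 1 ≤ n → ∫ ω, gn1 f Z τ n ω ∂P = 0) ∧
    (∀ n, 1 ≤ n → ∫ ω, gn2 b Z σ0 τ n ω ∂P = 0) ∧
    (∀ᵐ ω ∂P, Tendsto (fun n : ℕ => (n : ℝ)⁻¹ • gn1 f Z τ n ω) atTop (𝓝 0)) ∧
    (∀ᵐ ω ∂P, Tendsto (fun n : ℕ => (n : ℝ)⁻¹ * gn2 b Z σ0 τ n ω) atTop (𝓝 0)) :=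
  statement1_general P S C f Z b σ0 𝒢 τ hS0 hSmono hCpos hτ hfmeas hbmeas hZmeas hSC hZcond hZ2cond
    hZL2 hindep hident hbd1 hbd2 hCond5a hCond5b
end

section
/- (Key factorization step in the proofs of Proposition 2.2 and Theorem 2.1) Fix i, j with P(S_{i,j−1} < C_i < S_{ij}) > 0 and assume condition (B_{f(θ₀)}). Then E[f_{ij}(θ₀) I_{ij}^{cen} Z_{ij}(θ₀)] = E[f_{ij}(θ₀) I_{ij}^{cen}] · E[Z_{ij}(θ₀) I_{ij}^{cen}] / E[I_{ij}^{cen}]. -/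
open MeasureTheory Filter Topology

/-- Indicator (as a real random variable) of a censored gap time. -/
noncomputable def indCen {Ω : Type*} (S : ℕ → ℕ → Ω → ℝ) (C : ℕ → Ω → ℝ)
    (i j : ℕ) (ω : Ω) : ℝ :=
  if S i (j - 1) ω < C i ω ∧ C i ω < S i j ω then 1 else 0

/-- The σ-field `𝓞(f_i(θ)) = σ( f_{ij}(θ) I^{cen}_{ij}, I^{cen}_{ij} (j ≥ 1) )`. -/
noncomputable def obsSigma {Ω : Type*} {p : ℕ} (S : ℕ → ℕ → Ω → ℝ) (C : ℕ → Ω → ℝ)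
    (f : ℕ → ℕ → Ω → EuclideanSpace ℝ (Fin p)) (i : ℕ) : MeasurableSpace Ω :=
  ⨆ j : ℕ, ⨆ _ : 1 ≤ j,
    (MeasurableSpace.comap (fun ω => indCen S C i j ω • f i j ω) inferInstance ⊔
      MeasurableSpace.comap (indCen S C i j) inferInstance)

/-!
Write `I = I^{cen}_{ij}`. Since `I • f_{ij}` is `𝓞(f_i)`-measurable, `E[Z I f] = E[E[Z | 𝓞] I f]`,
and condition (B) replaces `I E[Z | 𝓞]` by `I E[Z | σ(I)]`. A `σ(I)`-measurable function is
constant on `{I = 1}`, so `I E[Z | σ(I)] = c I`, and integrating against `I` identifies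
`c = E[Z I] / E[I]`. Hence `E[Z I f] = c E[I f]`.
-/

namespace MeasureTheory

variable {Ω E : Type*} {m m0 : MeasurableSpace Ω} {μ : Measure Ω}
  [NormedAddCommGroup E] [NormedSpace ℝ E] [CompleteSpace E]

theorem integral_smul_eq_integral_condExp_smul (hm : m ≤ m0) [SigmaFinite (μ.trim hm)]
    {Z : Ω → ℝ} {g : Ω → E} (hg : StronglyMeasurable[m] g) (hZ : Integrable Z μ)
    (hZg : Integrable (fun ω => Z ω • g ω) μ) :
    ∫ ω, Z ω • g ω ∂μ = ∫ ω, μ[Z|m] ω • g ω ∂μ :=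
  (integral_condExp hm).symm.trans
    (integral_congr_ae <|
      condExp_smul_of_aestronglyMeasurable_right hZ hZg hg.aestronglyMeasurable)

theorem mul_condExp_comap_of_zero_or_one [IsFiniteMeasure μ] {I Z : Ω → ℝ}
    (hI01 : ∀ ω, I ω = 0 ∨ I ω = 1) (hIm : MeasurableSpace.comap I inferInstance ≤ m0)
    (hZ : Integrable Z μ) (hI : ∫ ω, I ω ∂μ ≠ 0) (ω : Ω) :
    I ω * μ[Z|MeasurableSpace.comap I inferInstance] ω
      = ((∫ ω, Z ω * I ω ∂μ) / ∫ ω, I ω ∂μ) * I ω := by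
  set h := μ[Z|MeasurableSpace.comap I inferInstance]
  obtain ⟨ω₁, hω₁⟩ : ∃ ω₁, I ω₁ = 1 := by
    by_contra! hne
    exact hI (by simp [fun ω => (hI01 ω).resolve_right (hne ω)])
  have hIh : ∀ ω, I ω * h ω = h ω₁ * I ω := by
    intro ω
    rcases hI01 ω with h0 | h1
    · simp [h0]
    · have hfac : h ω = h ω₁ := stronglyMeasurable_condExp.factorsThrough (h1.trans hω₁.symm)
      rw [h1, hfac, one_mul, mul_one]
  have hZI_int : Integrable (fun ω => Z ω * I ω) μ :=
    hZ.mul_bdd (c := 1) ((comap_measurable I).mono hIm le_rfl).aestronglyMeasurable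
      (ae_of_all _ fun ω => by rcases hI01 ω with hω | hω <;> simp [hω])
  have hZI : ∫ ω, Z ω * I ω ∂μ = h ω₁ * ∫ ω, I ω ∂μ := calc
    ∫ ω, Z ω * I ω ∂μ = ∫ ω, h ω * I ω ∂μ :=
      integral_smul_eq_integral_condExp_smul hIm
        (comap_measurable I).stronglyMeasurable hZ hZI_int
    _ = ∫ ω, h ω₁ * I ω ∂μ :=
      integral_congr_ae (ae_of_all _ fun ω => (mul_comm _ _).trans (hIh ω))
    _ = h ω₁ * ∫ ω, I ω ∂μ := integral_const_mul _ _
  rw [hIh, hZI, mul_div_cancel_right₀ _ hI]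

end MeasureTheory

lemma indCen_eq_zero_or_one {Ω : Type*} (S : ℕ → ℕ → Ω → ℝ) (C : ℕ → Ω → ℝ)
    (i j : ℕ) (ω : Ω) : indCen S C i j ω = 0 ∨ indCen S C i j ω = 1 := by
  unfold indCen; split <;> simp

theorem statement3_general
    {Ω : Type*} {m0 : MeasurableSpace Ω} (P : Measure Ω) [IsProbabilityMeasure P]
    {p : ℕ}
    (S : ℕ → ℕ → Ω → ℝ) (C : ℕ → Ω → ℝ)
    (f : ℕ → ℕ → Ω → EuclideanSpace ℝ (Fin p)) (Z : ℕ → ℕ → Ω → ℝ)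
    (i j : ℕ) (hj : 1 ≤ j)
    -- basic structure and measurability
    (hZmeas : ∀ i j, Measurable (Z i j))
    (hZL2 : Integrable (fun ω => (Z i j ω) ^ 2) P)
    -- the conditioning σ-fields are sub-σ-fields of 𝓕
    (hO : obsSigma S C f i ≤ m0)
    (hI : MeasurableSpace.comap (indCen S C i j) inferInstance ≤ m0)
    -- condition (B_{f(θ₀)}):
    -- `I^{cen}_{ij} E[Z_{ij} | 𝓞(f_i)] = I^{cen}_{ij} E[Z_{ij} | σ(I^{cen}_{ij})]` a.s.
    (hBf : ∀ j, 1 ≤ j →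
      (fun ω => indCen S C i j ω * (P[Z i j|obsSigma S C f i]) ω) =ᵐ[P]
        fun ω =>
          indCen S C i j ω *
            (P[Z i j|MeasurableSpace.comap (indCen S C i j) inferInstance]) ω)
    -- `P(S_{i,j-1} < C_i < S_{ij}) > 0`
    (hpos : 0 < ∫ ω, indCen S C i j ω ∂P)
    -- existence of the integrals involved
    (hint1 : Integrable (fun ω => (indCen S C i j ω * Z i j ω) • f i j ω) P) :
    ∫ ω, (indCen S C i j ω * Z i j ω) • f i j ω ∂P =
      ((∫ ω, Z i j ω * indCen S C i j ω ∂P) / ∫ ω, indCen S C i j ω ∂P) •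
        ∫ ω, indCen S C i j ω • f i j ω ∂P := by
  set I := indCen S C i j
  set c := (∫ ω, Z i j ω * I ω ∂P) / ∫ ω, I ω ∂P
  have hZ : Integrable (Z i j) P :=
    ((memLp_two_iff_integrable_sq (hZmeas i j).aestronglyMeasurable).2 hZL2).integrable
      one_le_two
  have hIf : StronglyMeasurable[obsSigma S C f i] fun ω => I ω • f i j ω :=
    ((comap_measurable _).mono (le_iSup₂_of_le j hj le_sup_left) le_rfl).stronglyMeasurable
  have hB : ∀ᵐ ω ∂P, I ω * P[Z i j|obsSigma S C f i] ω
      = I ω * P[Z i j|MeasurableSpace.comap I inferInstance] ω := hBf j hj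
  have hIcondExp : ∀ ω, I ω * P[Z i j|MeasurableSpace.comap I inferInstance] ω = c * I ω :=
    mul_condExp_comap_of_zero_or_one (indCen_eq_zero_or_one S C i j) hI hZ hpos.ne'
  calc ∫ ω, (I ω * Z i j ω) • f i j ω ∂P
      = ∫ ω, Z i j ω • I ω • f i j ω ∂P := by simp_rw [smul_smul, mul_comm]
    _ = ∫ ω, P[Z i j|obsSigma S C f i] ω • I ω • f i j ω ∂P :=
      integral_smul_eq_integral_condExp_smul hO hIf hZ
        (by simpa only [smul_smul, mul_comm] using hint1)
    _ = ∫ ω, c • I ω • f i j ω ∂P := integral_congr_ae <| hB.mono fun ω hω => by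
      simp only [smul_smul, mul_comm _ (I ω), hω, hIcondExp]
    _ = c • ∫ ω, I ω • f i j ω ∂P := integral_smul c _

/-- key factorization step: under condition `(B_{f(θ₀)})` and positivity of the
censoring probability, `E[f_{ij} I^{cen}_{ij} Z_{ij}] = E[f_{ij} I^{cen}_{ij}] ·
E[Z_{ij} I^{cen}_{ij}] / E[I^{cen}_{ij}]`. -/
theorem statement3
    {Ω : Type*} {m0 : MeasurableSpace Ω} (P : Measure Ω) [IsProbabilityMeasure P]
    {p : ℕ}
    (S : ℕ → ℕ → Ω → ℝ) (C : ℕ → Ω → ℝ)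
    (f : ℕ → ℕ → Ω → EuclideanSpace ℝ (Fin p)) (Z : ℕ → ℕ → Ω → ℝ)
    (i j : ℕ) (hj : 1 ≤ j)
    -- basic structure and measurability
    (hS0 : ∀ i ω, S i 0 ω = 0)
    (hSmono : ∀ i ω, StrictMono fun j => S i j ω)
    (hCpos : ∀ i ω, 0 < C i ω)
    (hSmeas : ∀ i j, Measurable (S i j))
    (hCmeas : ∀ i, Measurable (C i))
    (hfmeas : ∀ i j, StronglyMeasurable (f i j))
    (hZmeas : ∀ i j, Measurable (Z i j))
    (hZL2 : Integrable (fun ω => (Z i j ω) ^ 2) P)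
    -- the conditioning σ-fields are sub-σ-fields of 𝓕
    (hO : obsSigma S C f i ≤ m0)
    (hI : MeasurableSpace.comap (indCen S C i j) inferInstance ≤ m0)
    -- condition (B_{f(θ₀)}):
    -- `I^{cen}_{ij} E[Z_{ij} | 𝓞(f_i)] = I^{cen}_{ij} E[Z_{ij} | σ(I^{cen}_{ij})]` a.s.
    (hBf : ∀ j, 1 ≤ j →
      (fun ω => indCen S C i j ω * (P[Z i j|obsSigma S C f i]) ω) =ᵐ[P]
        fun ω =>
          indCen S C i j ω *
            (P[Z i j|MeasurableSpace.comap (indCen S C i j) inferInstance]) ω)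
    -- `P(S_{i,j-1} < C_i < S_{ij}) > 0`
    (hpos : 0 < ∫ ω, indCen S C i j ω ∂P)
    -- existence of the integrals involved
    (hint1 : Integrable (fun ω => (indCen S C i j ω * Z i j ω) • f i j ω) P)
    (hint2 : Integrable (fun ω => indCen S C i j ω • f i j ω) P)
    (hint3 : Integrable (fun ω => indCen S C i j ω * Z i j ω) P) :
    ∫ ω, (indCen S C i j ω * Z i j ω) • f i j ω ∂P =
      ((∫ ω, Z i j ω * indCen S C i j ω ∂P) / ∫ ω, indCen S C i j ω ∂P) •
        ∫ ω, indCen S C i j ω • f i j ω ∂P :=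
  statement3_general P S C f Z i j hj hZmeas hZL2 hO hI hBf hpos hint1
end

section
/- (Proposition 2.2) Assume Condition 5 and conditions (B_{f(θ₀)}) and (B_{b(η₀)}). Then the observed estimating functions are unbiased at the true parameter: E[g_{n,1}^{obs}(θ₀)] = 0 and E[g_{n,2}^{obs}(η₀)] = 0 for every n ≥ 1. -/
open MeasureTheory Filter Topology

noncomputable def indObs {Ω : Type*} (S : ℕ → ℕ → Ω → ℝ) (C : ℕ → Ω → ℝ)
    (i j : ℕ) (ω : Ω) : ℝ :=
  if S i j ω ≤ C i ω then 1 else 0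

/-- The σ-field `𝓞(f_i) = σ( f_{ij} I^{cen}_{ij}, I^{cen}_{ij} (j ≥ 1) )` for a vector-valued
family `f`. -/
noncomputable def obsSigmaV {Ω : Type*} {p : ℕ} (S : ℕ → ℕ → Ω → ℝ) (C : ℕ → Ω → ℝ)
    (f : ℕ → ℕ → Ω → EuclideanSpace ℝ (Fin p)) (i : ℕ) : MeasurableSpace Ω :=
  ⨆ j : ℕ, ⨆ _ : 1 ≤ j,
    (MeasurableSpace.comap (fun ω => indCen S C i j ω • f i j ω) inferInstance ⊔
      MeasurableSpace.comap (indCen S C i j) inferInstance)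

/-- The σ-field `𝓞(b_i) = σ( b_{ij} I^{cen}_{ij}, I^{cen}_{ij} (j ≥ 1) )` for a scalar family
`b`. -/
noncomputable def obsSigmaS {Ω : Type*} (S : ℕ → ℕ → Ω → ℝ) (C : ℕ → Ω → ℝ)
    (b : ℕ → ℕ → Ω → ℝ) (i : ℕ) : MeasurableSpace Ω :=
  ⨆ j : ℕ, ⨆ _ : 1 ≤ j,
    (MeasurableSpace.comap (fun ω => indCen S C i j ω * b i j ω) inferInstance ⊔
      MeasurableSpace.comap (indCen S C i j) inferInstance)

/-- The observed estimating function
`g_{n,1}^{obs}(θ₀) = ∑_{i=1}^n ∑_{j=1}^{τ_i} ( f_{ij} Z_{ij} I^{obs}_{ij}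
  + f_{ij} I^{cen}_{ij} E[Z_{ij} I^{cen}_{ij}]/E[I^{cen}_{ij}] )`. -/
noncomputable def gObs1 {Ω : Type*} {m0 : MeasurableSpace Ω} (P : Measure Ω) {p : ℕ}
    (S : ℕ → ℕ → Ω → ℝ) (C : ℕ → Ω → ℝ)
    (f : ℕ → ℕ → Ω → EuclideanSpace ℝ (Fin p)) (Z : ℕ → ℕ → Ω → ℝ)
    (τ : ℕ → Ω → ℕ) (n : ℕ) (ω : Ω) : EuclideanSpace ℝ (Fin p) :=
  ∑ i ∈ Finset.Icc 1 n, ∑ j ∈ Finset.Icc 1 (τ i ω),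
    ((Z i j ω * indObs S C i j ω) • f i j ω +
      (indCen S C i j ω *
        ((∫ ω', Z i j ω' * indCen S C i j ω' ∂P) / ∫ ω', indCen S C i j ω' ∂P)) • f i j ω)

/-- The observed estimating function
`g_{n,2}^{obs}(η₀) = ∑_{i=1}^n ∑_{j=1}^{τ_i} ( b_{ij}(Z_{ij}² − σ₀²) I^{obs}_{ij}
  + b_{ij} I^{cen}_{ij} E[(Z_{ij}² − σ₀²) I^{cen}_{ij}]/E[I^{cen}_{ij}] )`. -/
noncomputable def gObs2 {Ω : Type*} {m0 : MeasurableSpace Ω} (P : Measure Ω)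
    (S : ℕ → ℕ → Ω → ℝ) (C : ℕ → Ω → ℝ)
    (b : ℕ → ℕ → Ω → ℝ) (Z : ℕ → ℕ → Ω → ℝ) (σ0 : ℝ)
    (τ : ℕ → Ω → ℕ) (n : ℕ) (ω : Ω) : ℝ :=
  ∑ i ∈ Finset.Icc 1 n, ∑ j ∈ Finset.Icc 1 (τ i ω),
    (b i j ω * ((Z i j ω) ^ 2 - σ0 ^ 2) * indObs S C i j ω +
      b i j ω * indCen S C i j ω *
        ((∫ ω', ((Z i j ω') ^ 2 - σ0 ^ 2) * indCen S C i j ω' ∂P) /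
          ∫ ω', indCen S C i j ω' ∂P))

/-!
Let `A_{ij} = {S_{i,j-1} < C_i}`, an event of `𝓖_{i,j-1}` with
`I^obs_{ij} + I^cen_{ij} = 1_{A_{ij}}`, and write `X = Z`, `g = f` for the first function and
`X = Z² - σ₀²`, `g = b` for the second. Since `E[X_{ij} | 𝓖_{i,j-1}] = 0` and `1_{A_{ij}} g_{ij}`
is `𝓖_{i,j-1}`-measurable, `E[X I^obs g] = - E[X I^cen g]`. Condition (B) says that on the
censored event `E[X | 𝓞]` is `E[X | σ(I^cen)] = E[X I^cen] / E[I^cen] = c`, and `I^cen g` is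
`𝓞`-measurable, so `E[X I^cen g] = c E[I^cen g]`, which cancels the imputed term `E[c I^cen g]`.

The random number `τ_i` of summands is handled by extending the sum over `j` to a series whose
terms vanish beyond `τ_i`. The same identity applied to `‖I^cen g‖` bounds the expected norm of
the `(i, j)` summand by `E[1_{A_{ij}} ‖X g‖]`; as `∑_j 1_{A_{ij}} = τ_i`, Condition 5 makes the
series of these bounds converge, and expectation and summation may be interchanged.
-/

open ProbabilityTheory

theorem Finset.sum_Icc_one_eq_tsum {E : Type*} [AddCommMonoid E] [TopologicalSpace E] [T2Space E]
    (t : ℕ) (T : ℕ → E) (hT : ∀ j, t < j → T j = 0) :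
    ∑ j ∈ Finset.Icc 1 t, T j = ∑' k, T (k + 1) := by
  rw [tsum_eq_sum (s := Finset.range t) fun k hk => hT _ (by simpa using hk),
    Finset.range_eq_Ico, Finset.sum_Ico_add', Finset.Ico_add_one_right_eq_Icc, zero_add]

theorem Monotone.lt_iff_lt_of_le_of_forall_lt {α : Type*} [LinearOrder α] {s : ℕ → α}
    (hs : Monotone s) {c : α} {t : ℕ} (h0 : s 0 < c) (hct : c ≤ s t)
    (hlt : ∀ k, 1 ≤ k → k < t → s k < c) (k : ℕ) : s k < c ↔ k < t :=
  ⟨fun h => lt_of_not_ge fun hk => (hct.trans (hs hk)).not_gt h,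
    fun hk => (Nat.eq_zero_or_pos k).elim (fun h => h ▸ h0) (hlt k · hk)⟩

theorem sum_range_ite_lt_mul_le_ciSup_mul {a : ℕ → ℝ} (ha : BddAbove (Set.range a))
    (ha0 : ∀ j, 0 ≤ a j) (N t : ℕ) :
    ∑ k ∈ Finset.range N, (if k < t then (1 : ℝ) else 0) * a (k + 1) ≤ (⨆ j, a j) * t := by
  have hcard : ∑ k ∈ Finset.range N, (if k < t then (1 : ℝ) else 0) ≤ t := by
    rw [Finset.sum_boole]
    exact_mod_cast (Finset.card_le_card fun k hk => by simp_all).trans (Finset.card_range t).le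
  calc ∑ k ∈ Finset.range N, (if k < t then (1 : ℝ) else 0) * a (k + 1)
      ≤ ∑ k ∈ Finset.range N, (if k < t then (1 : ℝ) else 0) * ⨆ j, a j :=
        Finset.sum_le_sum fun k _ => mul_le_mul_of_nonneg_left (le_ciSup ha _) (by positivity)
    _ ≤ (⨆ j, a j) * t := by
        rw [← Finset.sum_mul, mul_comm]
        exact mul_le_mul_of_nonneg_left hcard ((ha0 0).trans (le_ciSup ha 0))

section Integrals
variable {Ω ι E : Type*} {m0 : MeasurableSpace Ω} {P : Measure Ω}
  [NormedAddCommGroup E] [NormedSpace ℝ E]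

theorem integrable_mul_smul_of_abs_le_one {X a G : Ω → ℝ} {g : Ω → E}
    (hX : AEStronglyMeasurable X P) (ha : AEStronglyMeasurable a P)
    (hg : AEStronglyMeasurable g P) (ha1 : ∀ ω, |a ω| ≤ 1) (hG : Integrable G P)
    (hXg : ∀ ω, ‖X ω • g ω‖ ≤ G ω) :
    Integrable (fun ω => (X ω * a ω) • g ω) P := by
  refine hG.mono' ((hX.mul ha).smul hg) (Eventually.of_forall fun ω => ?_)
  calc ‖(X ω * a ω) • g ω‖ = |a ω| * ‖X ω • g ω‖ := by
        rw [mul_comm, mul_smul, norm_smul, Real.norm_eq_abs]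
    _ ≤ 1 * G ω := mul_le_mul (ha1 ω) (hXg ω) (norm_nonneg _) zero_le_one
    _ = G ω := one_mul _

theorem summable_of_le_integral_of_sum_range_le {u : ℕ → ℝ} {v : ℕ → Ω → ℝ} {G : Ω → ℝ}
    (hu : ∀ k, 0 ≤ u k) (huv : ∀ k, u k ≤ ∫ ω, v k ω ∂P) (hv : ∀ k, Integrable (v k) P)
    (hG : Integrable G P) (hvG : ∀ N ω, ∑ k ∈ Finset.range N, v k ω ≤ G ω) :
    Summable u := by
  refine summable_of_sum_range_le (c := ∫ ω, G ω ∂P) hu fun N => ?_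
  calc ∑ k ∈ Finset.range N, u k ≤ ∑ k ∈ Finset.range N, ∫ ω, v k ω ∂P :=
        Finset.sum_le_sum fun k _ => huv k
    _ = ∫ ω, ∑ k ∈ Finset.range N, v k ω ∂P := (integral_finsetSum _ fun k _ => hv k).symm
    _ ≤ ∫ ω, G ω ∂P := integral_mono (integrable_finsetSum _ fun k _ => hv k) hG (hvG N)

theorem integral_sum_sum_Icc_eq_zero (s : Finset ι) (τ : ι → Ω → ℕ) (T : ι → ℕ → Ω → E)
    (hT : ∀ i j ω, τ i ω < j → T i j ω = 0) (hint : ∀ i k, Integrable (T i (k + 1)) P)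
    (hzero : ∀ i k, ∫ ω, T i (k + 1) ω ∂P = 0)
    (hsum : ∀ i, Summable fun k => ∫ ω, ‖T i (k + 1) ω‖ ∂P) :
    ∫ ω, ∑ i ∈ s, ∑ j ∈ Finset.Icc 1 (τ i ω), T i j ω ∂P = 0 := by
  have hseries : ∀ ω, ∑ i ∈ s, ∑ j ∈ Finset.Icc 1 (τ i ω), T i j ω =
      ∑' k, ∑ i ∈ s, T i (k + 1) ω := fun ω => by
    simp_rw [Finset.sum_Icc_one_eq_tsum _ _ (hT _ · ω)]
    refine (Summable.tsum_finsetSum fun i _ => ?_).symm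
    exact summable_of_ne_finset_zero (s := Finset.range (τ i ω)) fun k hk =>
      hT _ _ _ (by simpa using hk)
  have hint' : ∀ k, Integrable (fun ω => ∑ i ∈ s, T i (k + 1) ω) P := fun k =>
    integrable_finsetSum _ fun i _ => hint i k
  have hsum' : Summable fun k => ∫ ω, ‖∑ i ∈ s, T i (k + 1) ω‖ ∂P := by
    refine (summable_sum (s := s) fun i _ => hsum i).of_nonneg_of_le
      (fun k => integral_nonneg fun ω => norm_nonneg _) fun k => ?_
    rw [← integral_finsetSum _ fun i _ => (hint i k).norm]
    exact integral_mono (hint' k).norm (integrable_finsetSum _ fun i _ => (hint i k).norm)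
      fun ω => norm_sum_le _ _
  simp_rw [hseries]
  rw [← integral_tsum_of_summable_integral_norm hint' hsum']
  simp [integral_finsetSum _ fun i _ => hint i _, hzero]

end Integrals

section CondExp
variable {Ω E : Type*} {m m' m0 : MeasurableSpace Ω} {P : Measure Ω} [IsFiniteMeasure P]

theorem integral_smul_eq_of_condExp_smul_ae_eq [NormedAddCommGroup E] [NormedSpace ℝ E]
    [CompleteSpace E] (hm : m ≤ m0) {X : Ω → ℝ} {h : Ω → E} {c : ℝ}
    (hh : StronglyMeasurable[m] h) (hX : Integrable X P) (hXh : Integrable (X • h) P)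
    (hc : P[X|m] • h =ᵐ[P] c • h) :
    ∫ ω, X ω • h ω ∂P = c • ∫ ω, h ω ∂P := by
  calc ∫ ω, X ω • h ω ∂P = ∫ ω, P[X • h|m] ω ∂P := (integral_condExp hm).symm
    _ = ∫ ω, c • h ω ∂P := integral_congr_ae <|
        (condExp_smul_of_aestronglyMeasurable_right hX hXh hh.aestronglyMeasurable).trans hc
    _ = c • ∫ ω, h ω ∂P := integral_smul c h

omit [IsFiniteMeasure P] in
theorem comap_indicator_one_eq_generateFrom (B : Set Ω) :
    MeasurableSpace.comap (B.indicator (1 : Ω → ℝ)) inferInstance =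
      MeasurableSpace.generateFrom {B} := by
  refine le_antisymm (MeasurableSpace.comap_indicator_const_le_generateFrom_singleton _ _) ?_
  refine MeasurableSpace.generateFrom_le fun s hs => ⟨{1}, measurableSet_singleton 1, ?_⟩
  rw [Set.mem_singleton_iff.mp hs]
  ext ω
  by_cases h : ω ∈ B <;> simp [h]

theorem indicator_mul_condExp_comap_indicator {B : Set Ω} (hB : MeasurableSet B)
    {X : Ω → ℝ} (hX : Integrable X P) :
    (fun ω => B.indicator (1 : Ω → ℝ) ω *
      P[X|MeasurableSpace.comap (B.indicator (1 : Ω → ℝ)) inferInstance] ω) =ᵐ[P]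
      fun ω => B.indicator (1 : Ω → ℝ) ω *
        ((∫ ω', X ω' * B.indicator (1 : Ω → ℝ) ω' ∂P) / ∫ ω', B.indicator (1 : Ω → ℝ) ω' ∂P) := by
  have hcond := condExp_generateFrom_singleton hB hX
  rw [EventuallyEq, ae_restrict_iff' hB] at hcond
  have hXB : (fun ω => X ω * B.indicator (1 : Ω → ℝ) ω) = B.indicator X := by
    ext ω; by_cases h : ω ∈ B <;> simp [h]
  have hmean : ∫ ω, X ω ∂P[|B] =
      (∫ ω', X ω' * B.indicator (1 : Ω → ℝ) ω' ∂P) / ∫ ω', B.indicator (1 : Ω → ℝ) ω' ∂P := by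
    rw [hXB, integral_indicator hB, integral_indicator_one hB, ProbabilityTheory.cond,
      integral_smul_measure, ENNReal.toReal_inv, div_eq_inv_mul, smul_eq_mul, measureReal_def]
  rw [comap_indicator_one_eq_generateFrom B]
  filter_upwards [hcond] with ω hω
  by_cases h : ω ∈ B
  · rw [hω h, hmean]
  · simp [h]

theorem condExp_sub_const_ae_eq (hm : m ≤ m0) {Y : Ω → ℝ} (hY : Integrable Y P) (a : ℝ) :
    P[fun ω => Y ω - a|m] =ᵐ[P] fun ω => P[Y|m] ω - a := by
  have h := condExp_sub hY (integrable_const a) m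
  rwa [condExp_const hm] at h

theorem Filter.EventuallyEq.mul_condExp_sub_const (hm : m ≤ m0) (hm' : m' ≤ m0)
    {I Y : Ω → ℝ} (hY : Integrable Y P) (a : ℝ)
    (h : (fun ω => I ω * P[Y|m] ω) =ᵐ[P] fun ω => I ω * P[Y|m'] ω) :
    (fun ω => I ω * P[fun ω => Y ω - a|m] ω) =ᵐ[P]
      fun ω => I ω * P[fun ω => Y ω - a|m'] ω := by
  filter_upwards [condExp_sub_const_ae_eq hm hY a, condExp_sub_const_ae_eq hm' hY a, h]
    with ω hω hω' hω''
  rw [hω, hω', mul_sub, mul_sub, hω'']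

end CondExp

def obsSummand {Ω E : Type*} [AddCommGroup E] [Module ℝ E] (X Iobs Icen : Ω → ℝ) (g : Ω → E)
    (c : ℝ) (ω : Ω) : E :=
  (X ω * Iobs ω) • g ω + (Icen ω * c) • g ω

section ObsSummand
variable {Ω E : Type*} {m mO m0 : MeasurableSpace Ω} {P : Measure Ω} [IsFiniteMeasure P]
  [NormedAddCommGroup E] [NormedSpace ℝ E] {X Iobs Icen : Ω → ℝ} {g : Ω → E} {c : ℝ}

omit [IsFiniteMeasure P] in
theorem integrable_obsSummand (hXO : Integrable (fun ω => (X ω * Iobs ω) • g ω) P)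
    (hD : Integrable (fun ω => Icen ω • g ω) P) :
    Integrable (obsSummand X Iobs Icen g c) P := by
  have hcD : Integrable (fun ω => c • Icen ω • g ω) P := hD.smul c
  exact hXO.add (by simpa only [mul_comm _ c, mul_smul] using hcD)

theorem integral_obsSummand_eq_zero [CompleteSpace E] (hm : m ≤ m0) (hmO : mO ≤ m0)
    (hX : Integrable X P) (hXm : P[X|m] =ᵐ[P] 0)
    (hAg : StronglyMeasurable[m] fun ω => (Iobs ω + Icen ω) • g ω)
    (hDg : StronglyMeasurable[mO] fun ω => Icen ω • g ω)
    (hXc : ∀ᵐ ω ∂P, Icen ω * P[X|mO] ω = Icen ω * c)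
    (hXA : Integrable (fun ω => (X ω * (Iobs ω + Icen ω)) • g ω) P)
    (hXD : Integrable (fun ω => (X ω * Icen ω) • g ω) P)
    (hD : Integrable (fun ω => Icen ω • g ω) P) :
    ∫ ω, obsSummand X Iobs Icen g c ω ∂P = 0 := by
  simp_rw [← smul_smul] at hXA hXD
  have hA : ∫ ω, X ω • (Iobs ω + Icen ω) • g ω ∂P = 0 := by
    simpa using integral_smul_eq_of_condExp_smul_ae_eq hm hAg hX hXA (c := 0)
      (hXm.mono fun ω h => by simp [h])
  have hD' : ∫ ω, X ω • Icen ω • g ω ∂P = c • ∫ ω, Icen ω • g ω ∂P :=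
    integral_smul_eq_of_condExp_smul_ae_eq hmO hDg hX hXD <| hXc.mono fun ω h => by
      simp only [Pi.smul_apply', Pi.smul_apply, smul_smul]
      rw [mul_comm, h, mul_comm]
  have hsplit : ∀ ω, obsSummand X Iobs Icen g c ω =
      X ω • (Iobs ω + Icen ω) • g ω - (X ω • Icen ω • g ω - c • Icen ω • g ω) := fun ω => by
    simp only [obsSummand]; module
  have hcD : Integrable (fun ω => c • Icen ω • g ω) P := hD.smul c
  have hXDc : Integrable (fun ω => X ω • Icen ω • g ω - c • Icen ω • g ω) P := hXD.sub hcD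
  simp_rw [hsplit]
  rw [integral_sub hXA hXDc, integral_sub hXD hcD, integral_smul, hA, hD', sub_self, sub_zero]

theorem abs_mul_integral_norm_smul_le (hmO : mO ≤ m0) (hX : Integrable X P)
    (hDg : StronglyMeasurable[mO] fun ω => Icen ω • g ω)
    (hXc : ∀ᵐ ω ∂P, Icen ω * P[X|mO] ω = Icen ω * c) (hIcen : ∀ ω, 0 ≤ Icen ω)
    (hXD : Integrable (fun ω => (X ω * Icen ω) • g ω) P) :
    |c| * ∫ ω, ‖Icen ω • g ω‖ ∂P ≤ ∫ ω, Icen ω * ‖X ω • g ω‖ ∂P := by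
  have hnormD : ∀ ω, ‖(X ω * Icen ω) • g ω‖ = Icen ω * ‖X ω • g ω‖ := fun ω => by
    rw [norm_smul, norm_smul, norm_mul, Real.norm_of_nonneg (hIcen ω)]; ring
  have hnormD' : ∀ ω, ‖X ω * ‖Icen ω • g ω‖‖ = Icen ω * ‖X ω • g ω‖ := fun ω => by
    rw [norm_mul, norm_norm, norm_smul, norm_smul, Real.norm_of_nonneg (hIcen ω)]; ring
  have hXDn : Integrable (fun ω => X ω * ‖Icen ω • g ω‖) P :=
    hXD.norm.mono' (hX.aestronglyMeasurable.mul (hDg.mono hmO).aestronglyMeasurable.norm) <|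
      Eventually.of_forall fun ω => by rw [hnormD, hnormD']
  have hmean : ∫ ω, X ω * ‖Icen ω • g ω‖ ∂P = c * ∫ ω, ‖Icen ω • g ω‖ ∂P :=
    integral_smul_eq_of_condExp_smul_ae_eq hmO hDg.norm hX hXDn <| hXc.mono fun ω h => by
      simp only [Pi.smul_apply', Pi.smul_apply, smul_eq_mul, norm_smul,
        Real.norm_of_nonneg (hIcen ω)]
      linear_combination ‖g ω‖ * h
  calc |c| * ∫ ω, ‖Icen ω • g ω‖ ∂P = ‖∫ ω, X ω * ‖Icen ω • g ω‖ ∂P‖ := by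
        rw [hmean, Real.norm_eq_abs, abs_mul,
          abs_of_nonneg (integral_nonneg fun ω => norm_nonneg _)]
    _ ≤ ∫ ω, ‖X ω * ‖Icen ω • g ω‖‖ ∂P := norm_integral_le_integral_norm _
    _ = ∫ ω, Icen ω * ‖X ω • g ω‖ ∂P := by simp_rw [hnormD']

theorem integral_norm_obsSummand_le (hmO : mO ≤ m0) (hX : Integrable X P)
    (hDg : StronglyMeasurable[mO] fun ω => Icen ω • g ω)
    (hXc : ∀ᵐ ω ∂P, Icen ω * P[X|mO] ω = Icen ω * c)
    (hIobs : ∀ ω, 0 ≤ Iobs ω) (hIcen : ∀ ω, 0 ≤ Icen ω)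
    (hXO : Integrable (fun ω => (X ω * Iobs ω) • g ω) P)
    (hXD : Integrable (fun ω => (X ω * Icen ω) • g ω) P)
    (hD : Integrable (fun ω => Icen ω • g ω) P) :
    ∫ ω, ‖obsSummand X Iobs Icen g c ω‖ ∂P ≤ ∫ ω, (Iobs ω + Icen ω) * ‖X ω • g ω‖ ∂P := by
  have hnorm : ∀ a : Ω → ℝ, (∀ ω, 0 ≤ a ω) →
      ∀ ω, ‖(X ω * a ω) • g ω‖ = a ω * ‖X ω • g ω‖ := fun a ha ω => by
    rw [norm_smul, norm_smul, norm_mul, Real.norm_of_nonneg (ha ω)]; ring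
  have hO : Integrable (fun ω => Iobs ω * ‖X ω • g ω‖) P := by
    simpa only [hnorm Iobs hIobs] using hXO.norm
  have hDn : Integrable (fun ω => Icen ω * ‖X ω • g ω‖) P := by
    simpa only [hnorm Icen hIcen] using hXD.norm
  calc ∫ ω, ‖obsSummand X Iobs Icen g c ω‖ ∂P
      ≤ ∫ ω, (Iobs ω * ‖X ω • g ω‖ + |c| * ‖Icen ω • g ω‖) ∂P := by
        refine integral_mono (integrable_obsSummand hXO hD).norm
          (hO.add (hD.norm.const_mul _)) fun ω => ?_
        calc ‖obsSummand X Iobs Icen g c ω‖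
            ≤ ‖(X ω * Iobs ω) • g ω‖ + ‖(Icen ω * c) • g ω‖ := norm_add_le _ _
          _ = Iobs ω * ‖X ω • g ω‖ + |c| * ‖Icen ω • g ω‖ := by
            rw [hnorm Iobs hIobs, mul_comm (Icen ω) c, mul_smul, norm_smul c, Real.norm_eq_abs]
    _ = ∫ ω, Iobs ω * ‖X ω • g ω‖ ∂P + |c| * ∫ ω, ‖Icen ω • g ω‖ ∂P := by
        rw [integral_add hO (hD.norm.const_mul _), integral_const_mul]
    _ ≤ ∫ ω, Iobs ω * ‖X ω • g ω‖ ∂P + ∫ ω, Icen ω * ‖X ω • g ω‖ ∂P := by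
        gcongr; exact abs_mul_integral_norm_smul_le hmO hX hDg hXc hIcen hXD
    _ = ∫ ω, (Iobs ω + Icen ω) * ‖X ω • g ω‖ ∂P := by
        rw [← integral_add hO hDn]; simp_rw [add_mul]

end ObsSummand

section Censoring
variable {Ω : Type*} {S : ℕ → ℕ → Ω → ℝ} {C : ℕ → Ω → ℝ} {i j : ℕ}

theorem indObs_nonneg (ω : Ω) : 0 ≤ indObs S C i j ω := by
  unfold indObs; split_ifs <;> norm_num

theorem indCen_nonneg (ω : Ω) : 0 ≤ indCen S C i j ω := by
  unfold indCen; split_ifs <;> norm_num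

theorem indObs_add_indCen {ω : Ω} (hS : S i (j - 1) ω < S i j ω) :
    indObs S C i j ω + indCen S C i j ω = if S i (j - 1) ω < C i ω then 1 else 0 := by
  unfold indObs indCen
  split_ifs <;> grind

theorem obsSummand_eq_zero_of_not_lt {E : Type*} [AddCommGroup E] [Module ℝ E] {X : Ω → ℝ}
    {g : Ω → E} {c : ℝ} {ω : Ω} (hS : S i (j - 1) ω < S i j ω)
    (hC : ¬ S i (j - 1) ω < C i ω) :
    obsSummand X (indObs S C i j) (indCen S C i j) g c ω = 0 := by
  have hobs : ¬ S i j ω ≤ C i ω := fun h => hC (hS.trans_le h)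
  simp [obsSummand, indObs, indCen, hobs, hC]

theorem indCen_eq_indicator :
    indCen S C i j = {ω | S i (j - 1) ω < C i ω ∧ C i ω < S i j ω}.indicator 1 := by
  ext ω; simp [indCen, Set.indicator_apply]

variable {m0 : MeasurableSpace Ω}

theorem measurableSet_cen (hS : ∀ j, Measurable (S i j)) (hC : Measurable (C i)) :
    MeasurableSet {ω | S i (j - 1) ω < C i ω ∧ C i ω < S i j ω} :=
  (measurableSet_lt (hS _) hC).inter (measurableSet_lt hC (hS _))

theorem measurable_indObs (hS : Measurable (S i j)) (hC : Measurable (C i)) :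
    Measurable (indObs S C i j) :=
  Measurable.ite (measurableSet_le hS hC) measurable_const measurable_const

theorem measurable_indCen (hS : ∀ j, Measurable (S i j)) (hC : Measurable (C i)) :
    Measurable (indCen S C i j) :=
  Measurable.ite (measurableSet_cen hS hC) measurable_const measurable_const

theorem obsSigmaV_le {p : ℕ} {f : ℕ → ℕ → Ω → EuclideanSpace ℝ (Fin p)}
    (hf : ∀ j, 1 ≤ j → Measurable fun ω => indCen S C i j ω • f i j ω)
    (hcen : ∀ j, Measurable (indCen S C i j)) : obsSigmaV S C f i ≤ m0 :=
  iSup₂_le fun j hj => sup_le (hf j hj).comap_le (hcen j).comap_le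

theorem measurable_obsSigmaV {p : ℕ} (f : ℕ → ℕ → Ω → EuclideanSpace ℝ (Fin p))
    (hj : 1 ≤ j) : Measurable[obsSigmaV S C f i] fun ω => indCen S C i j ω • f i j ω :=
  measurable_iff_comap_le.mpr <| le_sup_left.trans <| le_iSup₂ (f := fun j (_ : 1 ≤ j) =>
    MeasurableSpace.comap (fun ω => indCen S C i j ω • f i j ω) inferInstance ⊔
      MeasurableSpace.comap (indCen S C i j) inferInstance) j hj

theorem obsSigmaS_le {b : ℕ → ℕ → Ω → ℝ}
    (hb : ∀ j, 1 ≤ j → Measurable fun ω => indCen S C i j ω * b i j ω)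
    (hcen : ∀ j, Measurable (indCen S C i j)) : obsSigmaS S C b i ≤ m0 :=
  iSup₂_le fun j hj => sup_le (hb j hj).comap_le (hcen j).comap_le

theorem measurable_obsSigmaS (b : ℕ → ℕ → Ω → ℝ) (hj : 1 ≤ j) :
    Measurable[obsSigmaS S C b i] fun ω => indCen S C i j ω * b i j ω :=
  measurable_iff_comap_le.mpr <| le_sup_left.trans <| le_iSup₂ (f := fun j (_ : 1 ≤ j) =>
    MeasurableSpace.comap (fun ω => indCen S C i j ω * b i j ω) inferInstance ⊔
      MeasurableSpace.comap (indCen S C i j) inferInstance) j hj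

end Censoring

noncomputable def cenMean {Ω : Type*} {m0 : MeasurableSpace Ω} (P : Measure Ω)
    (S : ℕ → ℕ → Ω → ℝ) (C : ℕ → Ω → ℝ) (X : Ω → ℝ) (i j : ℕ) : ℝ :=
  (∫ ω, X ω * indCen S C i j ω ∂P) / ∫ ω, indCen S C i j ω ∂P

theorem gObs2_eq_sum_obsSummand {Ω : Type*} {m0 : MeasurableSpace Ω} (P : Measure Ω)
    (S : ℕ → ℕ → Ω → ℝ) (C : ℕ → Ω → ℝ) (b Z : ℕ → ℕ → Ω → ℝ) (σ0 : ℝ) (τ : ℕ → Ω → ℕ)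
    (n : ℕ) : gObs2 P S C b Z σ0 τ n = fun ω => ∑ i ∈ Finset.Icc 1 n, ∑ j ∈ Finset.Icc 1 (τ i ω),
      obsSummand (fun ω => Z i j ω ^ 2 - σ0 ^ 2) (indObs S C i j) (indCen S C i j) (b i j)
        (cenMean P S C (fun ω => Z i j ω ^ 2 - σ0 ^ 2) i j) ω := by
  ext ω
  refine Finset.sum_congr rfl fun i _ => Finset.sum_congr rfl fun j _ => ?_
  simp only [obsSummand, cenMean, smul_eq_mul]
  ring

theorem integrable_obsSummand_and_integral_eq_zero_and_integral_norm_le {Ω E : Type*}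
    {m mO m0 : MeasurableSpace Ω} {P : Measure Ω} [IsFiniteMeasure P] [NormedAddCommGroup E]
    [NormedSpace ℝ E] [CompleteSpace E] {S : ℕ → ℕ → Ω → ℝ} {C : ℕ → Ω → ℝ} {i j : ℕ}
    {X G : Ω → ℝ} {g : Ω → E} (hm : m ≤ m0) (hmO : mO ≤ m0)
    (hS : ∀ ω, S i (j - 1) ω < S i j ω) (hSmeas : ∀ j, Measurable (S i j))
    (hCmeas : Measurable (C i)) (hAm : MeasurableSet[m] {ω | S i (j - 1) ω < C i ω})
    (hg : StronglyMeasurable[m] g) (hX : Integrable X P) (hXm : P[X|m] =ᵐ[P] 0)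
    (hG : Integrable G P) (hXg : ∀ ω, ‖X ω • g ω‖ ≤ G ω)
    (hD : Integrable (fun ω => indCen S C i j ω • g ω) P)
    (hDg : StronglyMeasurable[mO] fun ω => indCen S C i j ω • g ω)
    (hB : (fun ω => indCen S C i j ω * P[X|mO] ω) =ᵐ[P]
      fun ω => indCen S C i j ω * P[X|MeasurableSpace.comap (indCen S C i j) inferInstance] ω) :
    let T := obsSummand X (indObs S C i j) (indCen S C i j) g (cenMean P S C X i j)
    Integrable T P ∧ ∫ ω, T ω ∂P = 0 ∧
      ∫ ω, ‖T ω‖ ∂P ≤ ∫ ω, (indObs S C i j ω + indCen S C i j ω) * ‖X ω • g ω‖ ∂P := by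
  intro T
  have hc : ∀ᵐ ω ∂P, indCen S C i j ω * P[X|mO] ω = indCen S C i j ω * cenMean P S C X i j := by
    have h := indicator_mul_condExp_comap_indicator (P := P)
      (measurableSet_cen (j := j) hSmeas hCmeas) hX
    rw [← indCen_eq_indicator] at h
    exact hB.trans h
  have hAg : StronglyMeasurable[m] fun ω => (indObs S C i j ω + indCen S C i j ω) • g ω := by
    have h : (fun ω => (indObs S C i j ω + indCen S C i j ω) • g ω) =
        {ω | S i (j - 1) ω < C i ω}.indicator g := by
      ext ω; rw [indObs_add_indCen (hS ω)]; by_cases h : S i (j - 1) ω < C i ω <;> simp [h]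
    exact h ▸ hg.indicator hAm
  have hint : ∀ a : Ω → ℝ, Measurable a → (∀ ω, |a ω| ≤ 1) →
      Integrable (fun ω => (X ω * a ω) • g ω) P := fun a ha ha1 =>
    integrable_mul_smul_of_abs_le_one hX.aestronglyMeasurable ha.aestronglyMeasurable
      (hg.mono hm).aestronglyMeasurable ha1 hG hXg
  have hIobs := measurable_indObs (C := C) (hSmeas j) hCmeas
  have hIcen := measurable_indCen (j := j) hSmeas hCmeas
  have hXO := hint _ hIobs fun ω => by unfold indObs; split_ifs <;> norm_num
  have hXD := hint _ hIcen fun ω => by unfold indCen; split_ifs <;> norm_num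
  have hXA := hint _ (hIobs.add hIcen) fun ω => by
    rw [Pi.add_apply, indObs_add_indCen (hS ω)]; split_ifs <;> norm_num
  exact ⟨integrable_obsSummand hXO hD,
    integral_obsSummand_eq_zero hm hmO hX hXm hAg hDg hc hXA hXD hD,
    integral_norm_obsSummand_le hmO hX hDg hc indObs_nonneg indCen_nonneg hXO hXD hD⟩

theorem integral_sum_obsSummand_eq_zero {Ω E : Type*} {m0 : MeasurableSpace Ω} (P : Measure Ω)
    [IsFiniteMeasure P] [NormedAddCommGroup E] [NormedSpace ℝ E] [CompleteSpace E]
    (S : ℕ → ℕ → Ω → ℝ) (C : ℕ → Ω → ℝ) (X : ℕ → ℕ → Ω → ℝ) (g : ℕ → ℕ → Ω → E)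
    (𝒢 : ℕ → Filtration ℕ m0) (mO : ℕ → MeasurableSpace Ω) (τ : ℕ → Ω → ℕ)
    (hSmono : ∀ i ω, StrictMono fun j => S i j ω) (hSmeas : ∀ i j, Measurable (S i j))
    (hCmeas : ∀ i, Measurable (C i)) (hrisk : ∀ i ω k, S i k ω < C i ω ↔ k < τ i ω)
    (hτ : ∀ i ω, 1 ≤ τ i ω)
    (hSC : ∀ i j, 1 ≤ j → MeasurableSet[𝒢 i (j - 1)] {ω | S i (j - 1) ω < C i ω})
    (hg : ∀ i j, 1 ≤ j → StronglyMeasurable[𝒢 i (j - 1)] (g i j))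
    (hX : ∀ i j, 1 ≤ j → Integrable (X i j) P)
    (hXcond : ∀ i j, 1 ≤ j → P[X i j|𝒢 i (j - 1)] =ᵐ[P] fun _ => 0)
    (hbd : ∀ i ω, BddAbove (Set.range fun j => ‖X i j ω • g i j ω‖))
    (hCond5 : ∀ i, Integrable (fun ω => (⨆ j, ‖X i j ω • g i j ω‖) * (τ i ω : ℝ)) P)
    (hD : ∀ i j, 1 ≤ j → Integrable (fun ω => indCen S C i j ω • g i j ω) P)
    (hmO : ∀ i, mO i ≤ m0)
    (hDg : ∀ i j, 1 ≤ j → StronglyMeasurable[mO i] fun ω => indCen S C i j ω • g i j ω)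
    (hB : ∀ i j, 1 ≤ j → (fun ω => indCen S C i j ω * P[X i j|mO i] ω) =ᵐ[P]
      fun ω => indCen S C i j ω * P[X i j|MeasurableSpace.comap (indCen S C i j) inferInstance] ω)
    (s : Finset ℕ) :
    ∫ ω, ∑ i ∈ s, ∑ j ∈ Finset.Icc 1 (τ i ω), obsSummand (X i j) (indObs S C i j)
      (indCen S C i j) (g i j) (cenMean P S C (X i j) i j) ω ∂P = 0 := by
  have hXg : ∀ i j ω, ‖X i j ω • g i j ω‖ ≤ (⨆ j, ‖X i j ω • g i j ω‖) * τ i ω := fun i j ω =>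
    (le_ciSup (hbd i ω) j).trans <| le_mul_of_one_le_right
      ((norm_nonneg _).trans (le_ciSup (hbd i ω) j)) (by exact_mod_cast hτ i ω)
  have hfacts := fun i k => integrable_obsSummand_and_integral_eq_zero_and_integral_norm_le
    ((𝒢 i).le k) (hmO i) (fun ω => hSmono i ω (by simp)) (hSmeas i) (hCmeas i)
    (hSC i (k + 1) le_add_self) (hg i (k + 1) le_add_self) (hX i (k + 1) le_add_self)
    (hXcond i (k + 1) le_add_self) (hCond5 i) (hXg i (k + 1)) (hD i (k + 1) le_add_self)
    (hDg i (k + 1) le_add_self) (hB i (k + 1) le_add_self)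
  have hatRisk : ∀ i k ω,
      indObs S C i (k + 1) ω + indCen S C i (k + 1) ω = if k < τ i ω then 1 else 0 :=
    fun i k ω => by
      rw [indObs_add_indCen (hSmono i ω (by simp))]
      simp only [add_tsub_cancel_right, hrisk]
  refine integral_sum_sum_Icc_eq_zero s τ _ (fun i j ω hj => ?_) (fun i k => (hfacts i k).1)
    (fun i k => (hfacts i k).2.1) fun i => ?_
  · obtain ⟨k, rfl⟩ : ∃ k, j = k + 1 := ⟨j - 1, by omega⟩
    exact obsSummand_eq_zero_of_not_lt (hSmono i ω (by simp))
      (by rw [add_tsub_cancel_right, hrisk]; omega)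
  refine summable_of_le_integral_of_sum_range_le (fun k => integral_nonneg fun _ => norm_nonneg _)
    (fun k => (hfacts i k).2.2) (fun k => ?_) (hCond5 i) fun N ω => ?_
  · refine (hCond5 i).mono' ?_ (Eventually.of_forall fun ω => ?_)
    · exact ((measurable_indObs (hSmeas i _) (hCmeas i)).add
        (measurable_indCen (hSmeas i) (hCmeas i))).aestronglyMeasurable.mul
        ((hX i (k + 1) le_add_self).aestronglyMeasurable.smul
          ((hg i (k + 1) le_add_self).mono ((𝒢 i).le _)).aestronglyMeasurable).norm
    · rw [hatRisk]
      split_ifs <;> simp [hXg, (norm_nonneg _).trans (hXg i 0 ω)]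
  · simp_rw [hatRisk]
    exact sum_range_ite_lt_mul_le_ciSup_mul (hbd i ω) (fun _ => norm_nonneg _) N (τ i ω)

/-- Proposition 2.2: under Condition 5 and conditions `(B_{f(θ₀)})`,
`(B_{b(η₀)})`, the observed estimating functions are unbiased at the true parameter. -/
theorem statement4
    {Ω : Type*} {m0 : MeasurableSpace Ω} (P : Measure Ω) [IsProbabilityMeasure P]
    {p : ℕ}
    (S : ℕ → ℕ → Ω → ℝ) (C : ℕ → Ω → ℝ)
    (f : ℕ → ℕ → Ω → EuclideanSpace ℝ (Fin p)) (Z : ℕ → ℕ → Ω → ℝ) (b : ℕ → ℕ → Ω → ℝ)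
    (σ0 : ℝ) (𝒢 : ℕ → Filtration ℕ m0) (τ : ℕ → Ω → ℕ)
    -- basic structure of the data
    (hS0 : ∀ i ω, S i 0 ω = 0)
    (hSmono : ∀ i ω, StrictMono fun j => S i j ω)
    (hCpos : ∀ i ω, 0 < C i ω)
    (hSmeas : ∀ i j, Measurable (S i j))
    (hCmeas : ∀ i, Measurable (C i))
    (hτ : ∀ i ω, 1 ≤ τ i ω ∧ C i ω ≤ S i (τ i ω) ω ∧ ∀ j, 1 ≤ j → j < τ i ω → S i j ω < C i ω)
    -- measurability with respect to the enlarged filtrations 𝓖_i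
    (hfmeas : ∀ i j, 1 ≤ j → StronglyMeasurable[𝒢 i (j - 1)] (f i j))
    (hbmeas : ∀ i j, 1 ≤ j → StronglyMeasurable[𝒢 i (j - 1)] (b i j))
    (hZmeas : ∀ i j, 1 ≤ j → StronglyMeasurable[𝒢 i j] (Z i j))
    (hSC : ∀ i j, 1 ≤ j → MeasurableSet[𝒢 i (j - 1)] {ω | S i (j - 1) ω < C i ω})
    -- conditional moments at the true parameter (model (1.2) + assumption (A))
    (hZcond : ∀ i j, 1 ≤ j → P[Z i j|𝒢 i (j - 1)] =ᵐ[P] fun _ => 0)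
    (hZ2cond : ∀ i j, 1 ≤ j → P[fun ω => (Z i j ω) ^ 2|𝒢 i (j - 1)] =ᵐ[P] fun _ => σ0 ^ 2)
    (hZL2 : ∀ i j, 1 ≤ j → Integrable (fun ω => (Z i j ω) ^ 2) P)
    -- Condition 5
    (hbd1 : ∀ i ω, BddAbove (Set.range fun j => ‖Z i j ω • f i j ω‖))
    (hbd2 : ∀ i ω, BddAbove (Set.range fun j => |b i j ω * ((Z i j ω) ^ 2 - σ0 ^ 2)|))
    (hCond5a : ∀ i, Integrable (fun ω => (⨆ j, ‖Z i j ω • f i j ω‖) * (τ i ω : ℝ)) P)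
    (hCond5b : ∀ i,
      Integrable (fun ω => (⨆ j, |b i j ω * ((Z i j ω) ^ 2 - σ0 ^ 2)|) * (τ i ω : ℝ)) P)
    -- integrability of the imputed terms
    (hfcen : ∀ i j, 1 ≤ j → Integrable (fun ω => indCen S C i j ω • f i j ω) P)
    (hbcen : ∀ i j, 1 ≤ j → Integrable (fun ω => b i j ω * indCen S C i j ω) P)
    -- condition (B_{f(θ₀)})
    (hBf : ∀ i j, 1 ≤ j →
      (fun ω => indCen S C i j ω * (P[Z i j|obsSigmaV S C f i]) ω) =ᵐ[P]
        fun ω =>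
          indCen S C i j ω *
            (P[Z i j|MeasurableSpace.comap (indCen S C i j) inferInstance]) ω)
    -- condition (B_{b(η₀)})
    (hBb : ∀ i j, 1 ≤ j →
      (fun ω => indCen S C i j ω * (P[fun ω' => (Z i j ω') ^ 2|obsSigmaS S C b i]) ω) =ᵐ[P]
        fun ω =>
          indCen S C i j ω *
            (P[fun ω' => (Z i j ω') ^ 2|
              MeasurableSpace.comap (indCen S C i j) inferInstance]) ω) :
    (∀ n, 1 ≤ n → ∫ ω, gObs1 P S C f Z τ n ω ∂P = 0) ∧
    (∀ n, 1 ≤ n → ∫ ω, gObs2 P S C b Z σ0 τ n ω ∂P = 0) := by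
  have hrisk : ∀ i ω k, S i k ω < C i ω ↔ k < τ i ω := fun i ω =>
    (hSmono i ω).monotone.lt_iff_lt_of_le_of_forall_lt (by simpa [hS0 i ω] using hCpos i ω)
      (hτ i ω).2.1 (hτ i ω).2.2
  have hτ1 : ∀ i ω, 1 ≤ τ i ω := fun i ω => (hτ i ω).1
  have hcen : ∀ i j, Measurable (indCen S C i j) := fun i j =>
    measurable_indCen (hSmeas i) (hCmeas i)
  have hZ : ∀ i j, 1 ≤ j → Integrable (Z i j) P := fun i j hj =>
    ((memLp_two_iff_integrable_sq ((hZmeas i j hj).mono ((𝒢 i).le j)).aestronglyMeasurable).mpr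
      (hZL2 i j hj)).integrable one_le_two
  have hVle : ∀ i, obsSigmaV S C f i ≤ m0 := fun i => obsSigmaV_le
    (fun j hj => (hcen i j).smul ((hfmeas i j hj).mono ((𝒢 i).le _)).measurable) (hcen i)
  have hSle : ∀ i, obsSigmaS S C b i ≤ m0 := fun i => obsSigmaS_le
    (fun j hj => (hcen i j).mul ((hbmeas i j hj).mono ((𝒢 i).le _)).measurable) (hcen i)
  have hnorm : ∀ i j ω, ‖(Z i j ω ^ 2 - σ0 ^ 2) • b i j ω‖ = |b i j ω * (Z i j ω ^ 2 - σ0 ^ 2)| :=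
    fun i j ω => by rw [smul_eq_mul, mul_comm, Real.norm_eq_abs]
  refine ⟨fun n _ => integral_sum_obsSummand_eq_zero P S C Z f 𝒢 (obsSigmaV S C f) τ hSmono
    hSmeas hCmeas hrisk hτ1 hSC hfmeas hZ hZcond hbd1 hCond5a hfcen hVle
    (fun i j hj => (measurable_obsSigmaV f hj).stronglyMeasurable) hBf _, fun n _ => ?_⟩
  rw [gObs2_eq_sum_obsSummand]
  exact integral_sum_obsSummand_eq_zero P S C (fun i j ω => Z i j ω ^ 2 - σ0 ^ 2) b 𝒢
    (obsSigmaS S C b) τ hSmono hSmeas hCmeas hrisk hτ1 hSC hbmeas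
    (fun i j hj => (hZL2 i j hj).sub (integrable_const _))
    (fun i j hj => (condExp_sub_const_ae_eq ((𝒢 i).le _) (hZL2 i j hj) _).trans
      ((hZ2cond i j hj).mono fun ω h => by simp [h]))
    (by simpa only [hnorm] using hbd2) (by simpa only [hnorm] using hCond5b)
    (fun i j hj => by simpa only [smul_eq_mul, mul_comm] using hbcen i j hj) hSle
    (fun i j hj => (measurable_obsSigmaS b hj).stronglyMeasurable)
    (fun i j hj => (hBb i j hj).mul_condExp_sub_const (hSle i) (hcen i j).comap_le (hZL2 i j hj) _)
    _
end
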